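/- Let G be a multigraph with maximum degree Δ and maximum multiplicity μ ≥ 2, let e ∈ E_G(x,y), and let k = Δ+μ−1. Assume χ'(G) = k+1, e is k-critical, φ is a k-edge-coloring of G−e, and F = (x, e, y_0, e_1, y_1, …, e_p, y_p) with y_0 = y is a maximal multi-fan at x with respect to e and φ. If d_G(y) = Δ and x has exactly one Δ-neighbor z' in G from V(F)∖{x,y}, then e_F(x,z) = e_G(x,z) = μ for all z ∈ V(F)∖{x}, and d_G(z) = Δ−1 for all z ∈ V(F)∖{x,y,z'}. -/

import Mathlib

/-- A finite multigraph: finite vertex and edge types, each edge has an unordered pair of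
endvertices, and there are no loops. -/
structure Multigraph where
  V : Type
  E : Type
  [fintypeV : Fintype V]
  [fintypeE : Fintype E]
  ends : E → Sym2 V
  loopless : ∀ e, ¬ (ends e).IsDiag

attribute [instance] Multigraph.fintypeV Multigraph.fintypeE

namespace Multigraph

section Basic

variable (G : Multigraph)

/-- The degree of a vertex: the number of edges incident with it. -/
noncomputable def degree (v : G.V) : ℕ := {e : G.E | v ∈ G.ends e}.ncard

/-- The maximum degree Δ(G). -/
noncomputable def maxDegree : ℕ := sSup (Set.range G.degree)

/-- The number of edges joining `x` and `y` (the multiplicity e_G(x,y)). -/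
noncomputable def mult (x y : G.V) : ℕ := {e : G.E | G.ends e = s(x, y)}.ncard

/-- The maximum multiplicity μ(G). -/
noncomputable def maxMult : ℕ := sSup {m : ℕ | ∃ x y : G.V, G.mult x y = m}

/-- `c` is a proper edge coloring, with palette `{1,…,k}`, of the edges in `D`
(edges sharing an endvertex get distinct colors). -/
def IsProperColoringOn (k : ℕ) (D : Set G.E) (c : G.E → ℕ) : Prop :=
  (∀ e ∈ D, c e ∈ Set.Icc 1 k) ∧
  ∀ e ∈ D, ∀ f ∈ D, e ≠ f → (∃ v, v ∈ G.ends e ∧ v ∈ G.ends f) → c e ≠ c f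

/-- A proper `k`-edge-coloring of all of `G`. -/
def IsProperColoring (k : ℕ) (c : G.E → ℕ) : Prop := G.IsProperColoringOn k Set.univ c

/-- The chromatic index of the subgraph of `G` consisting of the edges in `D`
(vertices are irrelevant for edge colorings). -/
noncomputable def chromIndexOn (D : Set G.E) : ℕ := sInf {k | ∃ c, G.IsProperColoringOn k D c}

/-- The chromatic index χ'(G). -/
noncomputable def chromIndex : ℕ := G.chromIndexOn Set.univ

/-- The set of colors of the palette `{1,…,k}` missing at `v`, where only the edges in `D`
are regarded as colored. -/
def missingOn (k : ℕ) (D : Set G.E) (c : G.E → ℕ) (v : G.V) : Set ℕ :=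
  {i | i ∈ Set.Icc 1 k ∧ ∀ e ∈ D, v ∈ G.ends e → c e ≠ i}

/-- `X` is elementary: missing-color sets of distinct vertices of `X` are disjoint. -/
def IsElementaryOn (k : ℕ) (D : Set G.E) (c : G.E → ℕ) (X : Set G.V) : Prop :=
  ∀ u ∈ X, ∀ v ∈ X, u ≠ v → G.missingOn k D c u ∩ G.missingOn k D c v = ∅

/-- The boundary ∂_G(X): edges with an endvertex in `X` and an endvertex outside `X`. -/
def boundary (X : Set G.V) : Set G.E :=
  {e | (∃ v ∈ G.ends e, v ∈ X) ∧ (∃ v ∈ G.ends e, v ∉ X)}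

/-- `X` is strongly closed (w.r.t. the coloring `c` of the edges in `D`): every color on a
boundary edge of `X` is present at every vertex of `X`, and the colors on the boundary edges
are pairwise distinct. -/
def IsStronglyClosedOn (D : Set G.E) (c : G.E → ℕ) (X : Set G.V) : Prop :=
  (∀ e ∈ G.boundary X ∩ D, ∀ v ∈ X, ∃ f ∈ D, v ∈ G.ends f ∧ c f = c e) ∧
  ∀ e ∈ G.boundary X ∩ D, ∀ f ∈ G.boundary X ∩ D, e ≠ f → c e ≠ c f

end Basic

/-- A subgraph of `G`: a set of vertices together with a set of edges all of whose
endvertices belong to the vertex set. -/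
structure Subgraph (G : Multigraph) where
  verts : Set G.V
  edges : Set G.E
  support : ∀ e ∈ edges, ∀ v, v ∈ G.ends e → v ∈ verts

section Sub

variable (G : Multigraph)

/-- The whole graph, as a subgraph of itself. -/
def top : G.Subgraph := ⟨Set.univ, Set.univ, fun _ _ _ _ => Set.mem_univ _⟩

/-- `H` is a `k`-dense subgraph: it has an odd number of vertices and
`|E(H)| = (|V(H)|-1)·k/2`. -/
def IsDense (k : ℕ) (H : G.Subgraph) : Prop :=
  Odd H.verts.ncard ∧ 2 * H.edges.ncard = (H.verts.ncard - 1) * k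

/-- `H` is a `k`-dense subgraph of `G - F` (the graph obtained by deleting the edges of `F`). -/
def IsDenseIn (F : Set G.E) (k : ℕ) (H : G.Subgraph) : Prop :=
  H.edges ∩ F = ∅ ∧ G.IsDense k H

/-- `H` is a maximal `k`-dense subgraph of `G - F`. -/
def IsMaximalDenseIn (F : Set G.E) (k : ℕ) (H : G.Subgraph) : Prop :=
  G.IsDenseIn F k H ∧
  ∀ H' : G.Subgraph, G.IsDenseIn F k H' → H.verts ⊆ H'.verts → H.edges ⊆ H'.edges →
    H.verts = H'.verts ∧ H.edges = H'.edges

/-- The density Γ(H) of a subgraph `H` of `G`: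
`max { 2|E(H')|/(|V(H')|-1) : H' ⊆ H, |V(H')| ≥ 3 odd }` (and `0` if there is no such `H'`,
since in `ℝ` the supremum of the empty set is `0`). -/
noncomputable def densityOf (H : G.Subgraph) : ℝ :=
  sSup {x : ℝ | ∃ H' : G.Subgraph, H'.verts ⊆ H.verts ∧ H'.edges ⊆ H.edges ∧
    3 ≤ H'.verts.ncard ∧ Odd H'.verts.ncard ∧
    x = 2 * (H'.edges.ncard : ℝ) / ((H'.verts.ncard : ℝ) - 1)}

/-- The density Γ(G). -/
noncomputable def density : ℝ := G.densityOf G.top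

/-- `e` is a `k`-critical edge of `G`: `χ'(G-e) = k < χ'(G) = k+1`. -/
def IsCriticalEdge (k : ℕ) (e : G.E) : Prop :=
  G.chromIndexOn {e}ᶜ = k ∧ G.chromIndex = k + 1

/-- Degree of `v` in the subgraph consisting of the edges in `D`. -/
noncomputable def degreeOn (D : Set G.E) (v : G.V) : ℕ := {e : G.E | e ∈ D ∧ v ∈ G.ends e}.ncard

/-- Maximum degree of the subgraph consisting of the edges in `D`. -/
noncomputable def maxDegreeOn (D : Set G.E) : ℕ := sSup (Set.range (G.degreeOn D))

/-- Multiplicity of the pair `x,y` in the subgraph consisting of the edges in `D`. -/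
noncomputable def multOn (D : Set G.E) (x y : G.V) : ℕ :=
  {e : G.E | e ∈ D ∧ G.ends e = s(x, y)}.ncard

/-- Maximum multiplicity of the subgraph consisting of the edges in `D`. -/
noncomputable def maxMultOn (D : Set G.E) : ℕ := sSup {m : ℕ | ∃ x y : G.V, G.multOn D x y = m}

/-- The simple graph underlying the subgraph of `G` with edge set `D`. -/
def simpleOn (D : Set G.E) : SimpleGraph G.V where
  Adj a b := a ≠ b ∧ ∃ e ∈ D, G.ends e = s(a, b)
  symm := ⟨by
    rintro a b ⟨hab, e, he, hh⟩
    exact ⟨hab.symm, e, he, hh.trans Sym2.eq_swap⟩⟩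
  loopless := ⟨by rintro a ⟨h, -⟩; exact h rfl⟩

/-- The diameter (in `ℕ∞`) of the subgraph with vertex set `S` and edge set `D`:
the greatest distance between a pair of its vertices. -/
noncomputable def diamOn (S : Set G.V) (D : Set G.E) : ℕ∞ :=
  sSup {d : ℕ∞ | ∃ u ∈ S, ∃ v ∈ S, (G.simpleOn D).edist u v = d}

/-- The distance (in `ℕ∞`) between two edges of `G`: the length of a shortest path connecting
an endvertex of `e` and an endvertex of `f`. -/
noncomputable def edgeDist (e f : G.E) : ℕ∞ :=
  sInf {d : ℕ∞ | ∃ u v : G.V, u ∈ G.ends e ∧ v ∈ G.ends f ∧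
    (G.simpleOn Set.univ).edist u v = d}

/-- A matching: a set of edges no two of which share an endvertex. -/
def IsMatching (M : Set G.E) : Prop :=
  ∀ e ∈ M, ∀ f ∈ M, e ≠ f → ∀ v : G.V, v ∈ G.ends e → v ∉ G.ends f

/-- An edge `e ∈ E_G(x,y)` is fully `G`-saturated if `d_G(x) = d_G(y) = Δ(G)` and
`e_G(x,y) = μ(G)`. -/
def IsFullySaturated (e : G.E) : Prop :=
  ∃ x y : G.V, G.ends e = s(x, y) ∧ G.degree x = G.maxDegree ∧ G.degree y = G.maxDegree ∧
    G.mult x y = G.maxMult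

/-- One step along a Kempe `(α,β)`-chain: an edge of `D` colored `α` or `β` joining the
two vertices. -/
def chainStep (D : Set G.E) (c : G.E → ℕ) (α β : ℕ) (a b : G.V) : Prop :=
  ∃ e ∈ D, G.ends e = s(a, b) ∧ (c e = α ∨ c e = β)

/-- `u` and `v` lie on the same `(α,β)`-chain, i.e. `P_u(α,β) = P_v(α,β)`. -/
def sameChain (D : Set G.E) (c : G.E → ℕ) (α β : ℕ) (u v : G.V) : Prop :=
  Relation.ReflTransGen (G.chainStep D c α β) u v

end Sub

/-- The Goldberg–Seymour theorem (proved by Chen, Jing and Zang), as a hypothesis: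
every multigraph `G'` with `χ'(G') ≥ Δ(G')+2` satisfies `χ'(G') = ⌈Γ(G')⌉`. -/
def GoldbergSeymour : Prop :=
  ∀ G' : Multigraph, G'.maxDegree + 2 ≤ G'.chromIndex → (G'.chromIndex : ℤ) = ⌈G'.density⌉

/-- A (general) multi-fan at `x` with respect to the edge `e₀ ∈ E_G(x,y₀)` and the coloring
`c` of the edges in `D` with palette `{1,…,k}`: a sequence `(x, e₀, y₀, e₁, y₁, …, e_p, y_p)`
of vertices and pairwise distinct edges with `e_i ∈ E_G(x, y_i)` and, for `i ≥ 1`,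
`c(e_i)` missing at `y_j` for some `j < i`. -/
structure MultiFan (G : Multigraph) (k : ℕ) (D : Set G.E) (c : G.E → ℕ)
    (x : G.V) (e₀ : G.E) (y₀ : G.V) where
  p : ℕ
  edge : Fin (p + 1) → G.E
  vx : Fin (p + 1) → G.V
  edge_zero : edge 0 = e₀
  vx_zero : vx 0 = y₀
  ends_eq : ∀ i, G.ends (edge i) = s(x, vx i)
  edge_inj : Function.Injective edge
  fan_cond : ∀ i : Fin (p + 1), i ≠ 0 →
    ∃ j : Fin (p + 1), j < i ∧ c (edge i) ∈ G.missingOn k D c (vx j)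

namespace MultiFan

variable {G : Multigraph} {k : ℕ} {D : Set G.E} {c : G.E → ℕ} {x : G.V} {e₀ : G.E} {y₀ : G.V}

/-- The vertex set `V(F)` of a multi-fan. -/
def verts (F : MultiFan G k D c x e₀ y₀) : Set G.V := insert x (Set.range F.vx)

/-- `F` is a subsequence of `F'`. -/
def Subseq (F F' : MultiFan G k D c x e₀ y₀) : Prop :=
  ∃ ι : Fin (F.p + 1) → Fin (F'.p + 1), StrictMono ι ∧
    ∀ i, F'.edge (ι i) = F.edge i ∧ F'.vx (ι i) = F.vx i

/-- `F` is a maximal multi-fan: no multi-fan contains it as a proper subsequence. -/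
def IsMaximal (F : MultiFan G k D c x e₀ y₀) : Prop :=
  ∀ F' : MultiFan G k D c x e₀ y₀, F.Subseq F' → F'.p = F.p

/-- `F` contains no `i`-edge. -/
def NoColor (F : MultiFan G k D c x e₀ y₀) (i : ℕ) : Prop :=
  ∀ j, F.edge j ∈ D → c (F.edge j) ≠ i

/-- `F` is a multi-fan without `i`-edges that is maximal among such. -/
def IsMaximalWithout (F : MultiFan G k D c x e₀ y₀) (i : ℕ) : Prop :=
  F.NoColor i ∧
  ∀ F' : MultiFan G k D c x e₀ y₀, F'.NoColor i → F.Subseq F' → F'.p = F.p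

/-- `e_F(x,z)`: the number of edges of the multi-fan `F` joining `x` and `z`. -/
noncomputable def multAt (F : MultiFan G k D c x e₀ y₀) (z : G.V) : ℕ :=
  Nat.card {j : Fin (F.p + 1) // F.vx j = z}

end MultiFan

end Multigraph

/-!
Multi-fans are elementary: distinct vertices of `V(F)` miss disjoint sets of colors. For the
center `x` this is proved by recoloring fan edges backwards until `e` itself can be colored,
which `χ'(G) = k + 1` forbids; for two fan vertices `y_i, y_j` missing `α` (with `j` minimal)
one swaps an `(α,β)`-Kempe chain, `β` missing at `x`, and falls back on the first case.

If `F` is maximal, every color missing at a fan vertex `z` is therefore present at `x` on an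
edge of `F`, so `∑_z (k - d_{G-e}(z)) ≤ ∑_z |φ̄(z)| ≤ p < ∑_z e_F(x,z)`, the sums running over
`V(F) ∖ {x}`. Each summand of `∑_z (e_F(x,z) + d_{G-e}(z) - k) ≥ 1` is at most `μ + Δ - 1 - k`,
plus one at `z'`, the only vertex that can have degree `Δ` in `G - e`; hence all of them are
tight.
-/

theorem swap_apply_mem_Icc_iff {k α β γ : ℕ} (hα : α ∈ Set.Icc 1 k) (hβ : β ∈ Set.Icc 1 k) :
    Equiv.swap α β γ ∈ Set.Icc 1 k ↔ γ ∈ Set.Icc 1 k := by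
  rw [Equiv.swap_apply_def]
  split_ifs <;> simp_all

namespace Multigraph

variable {G : Multigraph} {k : ℕ} {D : Set G.E} {c : G.E → ℕ}

theorem degree_le_maxDegree (v : G.V) : G.degree v ≤ G.maxDegree :=
  le_csSup (Set.finite_range _).bddAbove ⟨v, rfl⟩

theorem mult_le_maxMult (a b : G.V) : G.mult a b ≤ G.maxMult := by
  refine le_csSup ((Set.finite_range fun p : G.V × G.V => G.mult p.1 p.2).bddAbove.mono ?_)
    ⟨a, b, rfl⟩
  rintro _ ⟨a, b, rfl⟩
  exact ⟨(a, b), rfl⟩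

theorem not_isProperColoring_of_lt_chromIndex (hk : k < G.chromIndex) (c : G.E → ℕ) :
    ¬ G.IsProperColoring k c :=
  fun hc => hk.not_ge (Nat.sInf_le ⟨c, hc⟩)

theorem degreeOn_compl_singleton_add_one {e : G.E} {v : G.V} (hv : v ∈ G.ends e) :
    G.degreeOn {e}ᶜ v + 1 = G.degree v := by
  have : {f | f ∈ ({e}ᶜ : Set G.E) ∧ v ∈ G.ends f} = {f | v ∈ G.ends f} \ {e} := by
    ext f; simp [and_comm]
  rw [degreeOn, degree, this, Set.ncard_sdiff_singleton_add_one (s := {f | v ∈ G.ends f}) hv]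

theorem degreeOn_compl_singleton_of_notMem {e : G.E} {v : G.V} (hv : v ∉ G.ends e) :
    G.degreeOn {e}ᶜ v = G.degree v := by
  rw [degreeOn, degree]
  congr 1
  ext f
  simp only [Set.mem_ofPred_eq, Set.mem_compl_singleton_iff, and_iff_right_iff_imp]
  rintro hf rfl
  exact hv hf

theorem finite_missingOn (v : G.V) : (G.missingOn k D c v).Finite :=
  (Set.finite_Icc 1 k).subset fun _ hi => hi.1

theorem le_ncard_missingOn_add_degreeOn (v : G.V) :
    k ≤ (G.missingOn k D c v).ncard + G.degreeOn D v := by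
  have hsub : Set.Icc 1 k ⊆ G.missingOn k D c v ∪ c '' {e | e ∈ D ∧ v ∈ G.ends e} := by
    intro i hi
    by_contra h
    simp only [Set.mem_union, Set.mem_image, not_or, not_exists, not_and] at h
    exact h.1 ⟨hi, fun e he hve hce => h.2 e ⟨he, hve⟩ hce⟩
  calc k = (Set.Icc 1 k).ncard := by simp
    _ ≤ (G.missingOn k D c v ∪ c '' {e | e ∈ D ∧ v ∈ G.ends e}).ncard :=
      Set.ncard_le_ncard hsub ((finite_missingOn v).union (Set.toFinite _))
    _ ≤ (G.missingOn k D c v).ncard + (c '' {e | e ∈ D ∧ v ∈ G.ends e}).ncard :=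
      Set.ncard_union_le _ _
    _ ≤ (G.missingOn k D c v).ncard + G.degreeOn D v := by
      gcongr
      exact Set.ncard_image_le (Set.toFinite _)

theorem missingOn_compl_singleton_nonempty (hΔ : G.maxDegree ≤ k) {e : G.E} {v : G.V}
    (hv : v ∈ G.ends e) : (G.missingOn k {e}ᶜ c v).Nonempty := by
  rw [← Set.ncard_pos (finite_missingOn v)]
  have := le_ncard_missingOn_add_degreeOn (k := k) (c := c) (D := {e}ᶜ) v
  have := degreeOn_compl_singleton_add_one hv
  have := degree_le_maxDegree v
  omega

section Recolor

variable [DecidableEq G.E] {e : G.E} {α : ℕ}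

theorem IsProperColoringOn.update (hc : G.IsProperColoringOn k D c) (hα : α ∈ Set.Icc 1 k)
    (hmiss : ∀ v ∈ G.ends e, α ∈ G.missingOn k D c v) :
    G.IsProperColoringOn k (insert e D) (Function.update c e α) := by
  have key : ∀ f ∈ insert e D, f ≠ e → ∀ v ∈ G.ends e, v ∈ G.ends f →
      Function.update c e α f ≠ α := by
    intro f hf hfe v hve hvf
    rw [Function.update_of_ne hfe]
    exact (hmiss v hve).2 f ((Set.mem_insert_iff.1 hf).resolve_left hfe) hvf
  refine ⟨fun f hf => ?_, fun f hf g hg hfg ⟨v, hvf, hvg⟩ => ?_⟩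
  · rcases eq_or_ne f e with rfl | hfe
    · simpa using hα
    · rw [Function.update_of_ne hfe]
      exact hc.1 f ((Set.mem_insert_iff.1 hf).resolve_left hfe)
  · rcases eq_or_ne f e with rfl | hfe
    · simpa using (key g hg hfg.symm v hvf hvg).symm
    rcases eq_or_ne g e with rfl | hge
    · simpa using key f hf hfg v hvg hvf
    rw [Function.update_of_ne hfe, Function.update_of_ne hge]
    exact hc.2 f ((Set.mem_insert_iff.1 hf).resolve_left hfe) g
      ((Set.mem_insert_iff.1 hg).resolve_left hge) hfg ⟨v, hvf, hvg⟩

theorem mem_missingOn_update_of_ne {γ : ℕ} {v : G.V} (hγ : γ ≠ α)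
    (h : γ ∈ G.missingOn k D c v) : γ ∈ G.missingOn k D (Function.update c e α) v := by
  refine ⟨h.1, fun f hf hvf => ?_⟩
  rcases eq_or_ne f e with rfl | hfe
  · simpa using hγ.symm
  · rw [Function.update_of_ne hfe]
    exact h.2 f hf hvf

theorem mem_missingOn_update_self (hc : G.IsProperColoringOn k D c) (he : e ∈ D)
    (hα : c e ≠ α) {v : G.V} (hv : v ∈ G.ends e) :
    c e ∈ G.missingOn k D (Function.update c e α) v := by
  refine ⟨hc.1 e he, fun f hf hvf => ?_⟩
  rcases eq_or_ne f e with rfl | hfe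
  · simpa using hα.symm
  · rw [Function.update_of_ne hfe]
    exact hc.2 f hf e he hfe ⟨v, hvf, hv⟩

end Recolor

section Kempe

variable {α β : ℕ}

/-- The `(α,β)`-subgraph; its connected components are the Kempe chains. -/
def kempeGraph (D : Set G.E) (c : G.E → ℕ) (α β : ℕ) : SimpleGraph G.V :=
  G.simpleOn {e | e ∈ D ∧ (c e = α ∨ c e = β)}

theorem mem_kempeChain_of_mem_ends {K : (G.kempeGraph D c α β).ConnectedComponent} {e : G.E}
    (he : e ∈ D) (hce : c e = α ∨ c e = β) {v w : G.V} (hv : v ∈ G.ends e) (hw : w ∈ G.ends e)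
    (hvK : v ∈ K) : w ∈ K := by
  rcases eq_or_ne v w with rfl | hvw
  · exact hvK
  · exact K.mem_supp_of_adj_mem_supp hvK
      ⟨hvw, e, ⟨he, hce⟩, (Sym2.mem_and_mem_iff hvw).1 ⟨hv, hw⟩⟩

open Classical in
noncomputable def kempeSwap (K : (G.kempeGraph D c α β).ConnectedComponent) : G.E → ℕ :=
  fun e => if ∃ v ∈ G.ends e, v ∈ K then Equiv.swap α β (c e) else c e

variable {K : (G.kempeGraph D c α β).ConnectedComponent}

theorem kempeSwap_of_mem {e : G.E} {v : G.V} (hv : v ∈ G.ends e) (hvK : v ∈ K) :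
    kempeSwap K e = Equiv.swap α β (c e) :=
  if_pos ⟨v, hv, hvK⟩

theorem kempeSwap_of_notMem {e : G.E} (he : e ∈ D) {v : G.V} (hv : v ∈ G.ends e)
    (hvK : v ∉ K) : kempeSwap K e = c e := by
  unfold kempeSwap
  split_ifs with h
  · obtain ⟨w, hw, hwK⟩ := h
    refine Equiv.swap_apply_of_ne_of_ne (fun hα => ?_) (fun hβ => ?_)
    · exact hvK (mem_kempeChain_of_mem_ends he (.inl hα) hw hv hwK)
    · exact hvK (mem_kempeChain_of_mem_ends he (.inr hβ) hw hv hwK)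
  · rfl

theorem IsProperColoringOn.kempeSwap (hc : G.IsProperColoringOn k D c)
    (hα : α ∈ Set.Icc 1 k) (hβ : β ∈ Set.Icc 1 k) :
    G.IsProperColoringOn k D (kempeSwap K) := by
  refine ⟨fun e he => ?_, fun e he f hf hef ⟨v, hve, hvf⟩ => ?_⟩
  · unfold Multigraph.kempeSwap
    split_ifs
    · exact (swap_apply_mem_Icc_iff hα hβ).2 (hc.1 e he)
    · exact hc.1 e he
  · by_cases hvK : v ∈ K
    · rw [kempeSwap_of_mem hve hvK, kempeSwap_of_mem hvf hvK]
      exact (Equiv.injective _).ne (hc.2 e he f hf hef ⟨v, hve, hvf⟩)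
    · rw [kempeSwap_of_notMem he hve hvK, kempeSwap_of_notMem hf hvf hvK]
      exact hc.2 e he f hf hef ⟨v, hve, hvf⟩

theorem missingOn_kempeSwap_of_notMem {v : G.V} (hvK : v ∉ K) :
    G.missingOn k D (kempeSwap K) v = G.missingOn k D c v := by
  ext γ
  refine and_congr_right fun _ => forall₂_congr fun e he => ?_
  exact imp_congr_right fun hve => by rw [kempeSwap_of_notMem he hve hvK]

theorem mem_missingOn_kempeSwap_of_mem (hα : α ∈ Set.Icc 1 k) (hβ : β ∈ Set.Icc 1 k)
    {v : G.V} (hvK : v ∈ K) {γ : ℕ} :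
    γ ∈ G.missingOn k D (kempeSwap K) v ↔ Equiv.swap α β γ ∈ G.missingOn k D c v := by
  refine and_congr (swap_apply_mem_Icc_iff hα hβ).symm (forall₂_congr fun e _ => ?_)
  refine imp_congr_right fun hve => ?_
  rw [kempeSwap_of_mem hve hvK, Ne, Ne, Equiv.swap_apply_eq_iff]

theorem ends_out_fst_ne_snd (e : G.E) : (G.ends e).out.1 ≠ (G.ends e).out.2 := fun h =>
  G.loopless e (by rw [← Quot.out_eq (G.ends e)]; exact Sym2.mk_isDiag_iff.2 h)

/-- Each vertex of `S` meets at most two `(α,β)`-edges, and one fewer for each of `α`, `β` that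
it misses; the bound follows by charging each edge to its two endpoints. -/
theorem two_mul_ncard_add_ncard_missing_le (hc : G.IsProperColoringOn k D c) (S : Set G.V)
    (E' : Set G.E) (hE' : ∀ e ∈ E', e ∈ D ∧ (c e = α ∨ c e = β) ∧ ∀ v ∈ G.ends e, v ∈ S) :
    2 * E'.ncard + {q ∈ S ×ˢ {α, β} | q.2 ∈ G.missingOn k D c q.1}.ncard ≤ 2 * S.ncard := by
  set T := {q ∈ S ×ˢ {α, β} | q.2 ∈ G.missingOn k D c q.1}
  have hT : T ⊆ S ×ˢ {α, β} := fun q hq => hq.1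
  have hfin : (S ×ˢ ({α, β} : Set ℕ)).Finite := (Set.toFinite S).prod (Set.toFinite _)
  let end_ : G.E × Bool → G.V := fun q => if q.2 then (G.ends q.1).out.1 else (G.ends q.1).out.2
  have hend : ∀ q : G.E × Bool, end_ q ∈ G.ends q.1 := by
    rintro ⟨e, _ | _⟩
    · exact Sym2.out_snd_mem _
    · exact Sym2.out_fst_mem _
  have hmaps : ∀ q ∈ E' ×ˢ (Set.univ : Set Bool), (end_ q, c q.1) ∈ S ×ˢ {α, β} \ T := by
    rintro ⟨e, b⟩ ⟨he, -⟩
    obtain ⟨heD, hce, hS⟩ := hE' e he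
    exact ⟨⟨hS _ (hend _), hce⟩, fun hq => hq.2.2 e heD (hend _) rfl⟩
  have hinj : Set.InjOn (fun q => (end_ q, c q.1)) (E' ×ˢ (Set.univ : Set Bool)) := by
    rintro ⟨e, b⟩ ⟨he, -⟩ ⟨f, b'⟩ ⟨hf, -⟩ heq
    simp only [Prod.mk.injEq] at heq
    obtain rfl | hef := eq_or_ne e f
    · cases b <;> cases b' <;> simp_all [end_, ends_out_fst_ne_snd, (ends_out_fst_ne_snd e).symm]
    · exact absurd heq.2 (hc.2 e (hE' e he).1 f (hE' f hf).1 hef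
        ⟨_, hend (e, b), heq.1 ▸ hend (f, b')⟩)
  have hcard := Set.ncard_le_ncard_of_injOn _ hmaps hinj hfin.sdiff
  rw [Set.ncard_sdiff hT (hfin.subset hT), Set.ncard_prod, Set.ncard_prod, Set.ncard_univ,
    Nat.card_eq_fintype_card, Fintype.card_bool] at hcard
  have hT' := Set.ncard_le_ncard hT hfin
  have hpair : S.ncard * ({α, β} : Set ℕ).ncard ≤ S.ncard * 2 :=
    Nat.mul_le_mul_left _ ((Set.ncard_insert_le α {β}).trans (by simp))
  rw [Set.ncard_prod] at hT'
  omega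

theorem ncard_supp_le_ncard_add_one {D' : Set G.E} (K : (G.simpleOn D').ConnectedComponent) :
    K.supp.ncard ≤ {e | e ∈ D' ∧ ∀ v ∈ G.ends e, v ∈ K}.ncard + 1 := by
  have hK : K.supp.ncard ≤ K.toSimpleGraph.edgeSet.ncard + 1 :=
    K.connected_toSimpleGraph.card_vert_le_card_edgeSet_add_one
  rw [← Set.ncard_image_of_injective _ (Sym2.map.injective Subtype.val_injective)] at hK
  refine hK.trans (Nat.add_le_add_right ((Set.ncard_le_ncard ?_).trans (Set.ncard_image_le
    (f := G.ends) (Set.toFinite _))) 1)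
  rintro _ ⟨z, hz, rfl⟩
  induction z using Sym2.ind with | _ a b => ?_
  obtain ⟨-, e, he, hends⟩ := hz
  refine ⟨e, ⟨he, fun v hv => ?_⟩, by simpa using hends⟩
  rw [hends, Sym2.mem_iff] at hv
  rcases hv with rfl | rfl
  exacts [a.2, b.2]

theorem ncard_missing_kempeChain_le_two (hc : G.IsProperColoringOn k D c)
    (K : (G.kempeGraph D c α β).ConnectedComponent) :
    {q ∈ (K : Set G.V) ×ˢ {α, β} | q.2 ∈ G.missingOn k D c q.1}.ncard ≤ 2 := by
  set E' := {e | e ∈ {e | e ∈ D ∧ (c e = α ∨ c e = β)} ∧ ∀ v ∈ G.ends e, v ∈ K}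
  have hV : K.supp.ncard ≤ E'.ncard + 1 := ncard_supp_le_ncard_add_one K
  have hE : 2 * E'.ncard + {q ∈ (K : Set G.V) ×ˢ {α, β} | q.2 ∈ G.missingOn k D c q.1}.ncard ≤
      2 * K.supp.ncard :=
    two_mul_ncard_add_ncard_missing_le hc K.supp E' fun e he => ⟨he.1.1, he.1.2, he.2⟩
  omega

theorem notMem_kempeChain_of_missingOn (hc : G.IsProperColoringOn k D c)
    {K : (G.kempeGraph D c α β).ConnectedComponent} {u v w : G.V} (hu : u ∈ K) (hv : v ∈ K)
    (huv : u ≠ v) (huw : u ≠ w) (hvw : v ≠ w) (hαu : α ∈ G.missingOn k D c u)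
    (hβv : β ∈ G.missingOn k D c v) (hαw : α ∈ G.missingOn k D c w) : w ∉ K := by
  intro hw
  have h3 : ({(u, α), (v, β), (w, α)} : Set (G.V × ℕ)).ncard = 3 :=
    Set.ncard_eq_three.2 ⟨_, _, _, fun h => huv (congrArg Prod.fst h),
      fun h => huw (congrArg Prod.fst h), fun h => hvw (congrArg Prod.fst h), rfl⟩
  have := (h3.symm.trans_le (Set.ncard_le_ncard ?_ (Set.toFinite _))).trans
    (ncard_missing_kempeChain_le_two hc K)
  · omega
  · rintro q (rfl | rfl | rfl)
    exacts [⟨⟨hu, .inl rfl⟩, hαu⟩, ⟨⟨hv, .inr (.refl _)⟩, hβv⟩, ⟨⟨hw, .inl rfl⟩, hαw⟩]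

end Kempe

namespace MultiFan

section Basic

variable {x : G.V} {e₀ : G.E} {y₀ : G.V} (F : MultiFan G k D c x e₀ y₀)

theorem center_mem_ends (i : Fin (F.p + 1)) : x ∈ G.ends (F.edge i) := by
  rw [F.ends_eq i]; exact Sym2.mem_mk_left _ _

theorem vx_ne_center (i : Fin (F.p + 1)) : F.vx i ≠ x := fun h =>
  G.loopless (F.edge i) (by rw [F.ends_eq i, h]; exact Sym2.mk_isDiag_iff.2 rfl)

theorem mem_image_vx_of_mem_verts [DecidableEq G.V] {z : G.V} (hz : z ∈ F.verts) (hzx : z ≠ x) :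
    z ∈ Finset.univ.image F.vx := by
  rcases hz with rfl | ⟨i, rfl⟩
  exacts [absurd rfl hzx, Finset.mem_image_of_mem _ (Finset.mem_univ i)]

/-- The first `m + 1` entries of `F` still form a multi-fan when the coloring `c` is replaced
by `c'`. -/
def PrefixFan (c' : G.E → ℕ) (m : ℕ) : Prop :=
  ∀ i : Fin (F.p + 1), i ≠ 0 → (i : ℕ) ≤ m → ∃ j < i, c' (F.edge i) ∈ G.missingOn k D c' (F.vx j)

theorem prefixFan (m : ℕ) : F.PrefixFan c m := fun i hi _ => F.fan_cond i hi

theorem PrefixFan.mono {F : MultiFan G k D c x e₀ y₀} {c' : G.E → ℕ} {m n : ℕ}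
    (hF : F.PrefixFan c' m) (hnm : n ≤ m) : F.PrefixFan c' n :=
  fun i hi hin => hF i hi (hin.trans hnm)

def snoc {f : G.E} {w : G.V} (hf : G.ends f = s(x, w)) (hnew : ∀ i, F.edge i ≠ f)
    {l : Fin (F.p + 1)} (hl : c f ∈ G.missingOn k D c (F.vx l)) : MultiFan G k D c x e₀ y₀ where
  p := F.p + 1
  edge := Fin.snoc F.edge f
  vx := Fin.snoc F.vx w
  edge_zero := by rw [← Fin.castSucc_zero, Fin.snoc_castSucc, F.edge_zero]
  vx_zero := by rw [← Fin.castSucc_zero, Fin.snoc_castSucc, F.vx_zero]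
  ends_eq i := by
    induction i using Fin.lastCases with
    | last => simpa using hf
    | cast i => simpa using F.ends_eq i
  edge_inj := by
    intro a b hab
    induction a using Fin.lastCases <;> induction b using Fin.lastCases <;>
      simp_all [Fin.snoc_castSucc, Fin.snoc_last, F.edge_inj.eq_iff, (hnew _).symm]
  fan_cond i hi := by
    induction i using Fin.lastCases with
    | last => exact ⟨l.castSucc, Fin.castSucc_lt_last l, by simpa using hl⟩
    | cast i =>
      obtain ⟨j, hj, hmiss⟩ := F.fan_cond i (by rintro rfl; exact hi rfl)
      exact ⟨j.castSucc, Fin.castSucc_lt_castSucc_iff.2 hj, by simpa using hmiss⟩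

variable {F}

theorem IsMaximal.exists_edge_eq (hF : F.IsMaximal) {f : G.E} (hfx : x ∈ G.ends f)
    {l : Fin (F.p + 1)} (hl : c f ∈ G.missingOn k D c (F.vx l)) : ∃ i, F.edge i = f := by
  by_contra! hnew
  obtain ⟨w, hw⟩ := Sym2.mem_iff_exists.1 hfx
  have := hF (F.snoc hw hnew hl) ⟨Fin.castSucc, Fin.strictMono_castSucc, fun i => by
    simp [snoc]⟩
  simp [snoc] at this

theorem multAt_le_mult (F : MultiFan G k D c x e₀ y₀) (z : G.V) : F.multAt z ≤ G.mult x z :=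
  Set.ncard_le_ncard_of_injOn F.edge (fun i (hi : F.vx i = z) => by simp [F.ends_eq, hi])
    F.edge_inj.injOn

theorem sum_multAt [DecidableEq G.V] (F : MultiFan G k D c x e₀ y₀) :
    ∑ z ∈ Finset.univ.image F.vx, F.multAt z = F.p + 1 := by
  have h := Finset.card_eq_sum_card_image F.vx Finset.univ
  rw [Finset.card_univ, Fintype.card_fin] at h
  refine (Finset.sum_congr rfl fun z _ => ?_).trans h.symm
  rw [multAt, Nat.card_eq_fintype_card, Fintype.card_subtype]

end Basic

variable {c' : G.E → ℕ} {x y : G.V} {e₀ : G.E} {F : MultiFan G k {e₀}ᶜ c x e₀ y} {α β n : ℕ}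

theorem edge_mem_compl {i : Fin (F.p + 1)} (hi : i ≠ 0) : F.edge i ∈ ({e₀}ᶜ : Set G.E) :=
  fun h => hi (F.edge_inj (h.trans F.edge_zero.symm))

/-- The fan edges before `e_t` never had the color `α`, which is missing at the center. -/
theorem PrefixFan.update [DecidableEq G.E] {m : ℕ} (hF : F.PrefixFan c' m)
    (hα : α ∈ G.missingOn k {e₀}ᶜ c' x) {t : Fin (F.p + 1)} (hnt : n < t) (hnm : n ≤ m) :
    F.PrefixFan (Function.update c' (F.edge t) α) n := by
  intro i hi hin
  obtain ⟨l, hl, hmiss⟩ := hF i hi (hin.trans hnm)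
  have hit : F.edge i ≠ F.edge t := F.edge_inj.ne fun h => by omega
  refine ⟨l, hl, ?_⟩
  rw [Function.update_of_ne hit]
  exact mem_missingOn_update_of_ne
    (fun h => hα.2 _ (edge_mem_compl hi) (F.center_mem_ends i) h) hmiss

theorem PrefixFan.disjoint_missingOn_center (hG : ∀ c, ¬ G.IsProperColoring k c)
    (hc' : G.IsProperColoringOn k {e₀}ᶜ c') {m : ℕ} (hF : F.PrefixFan c' m)
    {t : Fin (F.p + 1)} (ht : (t : ℕ) ≤ m) :
    Disjoint (G.missingOn k {e₀}ᶜ c' x) (G.missingOn k {e₀}ᶜ c' (F.vx t)) := by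
  classical
  induction t using WellFoundedLT.induction generalizing c' m with | _ t ih => ?_
  rw [Set.disjoint_left]
  intro α hαx hαt
  have hmiss : ∀ v ∈ G.ends (F.edge t), α ∈ G.missingOn k {e₀}ᶜ c' v := by
    intro v hv
    rw [F.ends_eq t, Sym2.mem_iff] at hv
    rcases hv with rfl | rfl
    exacts [hαx, hαt]
  rcases eq_or_ne t 0 with rfl | ht0
  · have hc'' := hc'.update hαx.1 hmiss
    rw [F.edge_zero, Set.insert_eq, Set.union_compl_self] at hc''
    exact hG _ hc''
  · obtain ⟨j, hjt, hγj⟩ := hF t ht0 ht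
    have hne : c' (F.edge t) ≠ α := fun h => hαx.2 _ (edge_mem_compl ht0) (F.center_mem_ends t) h
    have hc'' := hc'.update hαx.1 hmiss
    rw [Set.insert_eq_of_mem (edge_mem_compl ht0)] at hc''
    refine Set.disjoint_left.1 (ih j hjt hc'' (hF.update hαx hjt (by omega)) le_rfl)
      (mem_missingOn_update_self hc' (edge_mem_compl ht0) hne (F.center_mem_ends t))
      (mem_missingOn_update_of_ne hne hγj)

/-- Since `β` is missing at the center, no fan edge has color `β`. -/
theorem PrefixFan.kempeSwap (hα : α ∈ Set.Icc 1 k) (hβ : β ∈ Set.Icc 1 k)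
    {K : (G.kempeGraph {e₀}ᶜ c' α β).ConnectedComponent} (hxK : x ∉ K)
    (hβx : β ∈ G.missingOn k {e₀}ᶜ c' x) (hF : F.PrefixFan c' n)
    (hαwit : ∀ i : Fin (F.p + 1), i ≠ 0 → (i : ℕ) ≤ n → c' (F.edge i) = α →
      ∃ l < i, α ∈ G.missingOn k {e₀}ᶜ c' (F.vx l) ∧ F.vx l ∉ K) :
    F.PrefixFan (kempeSwap K) n := by
  intro i hi hin
  rw [kempeSwap_of_notMem (edge_mem_compl hi) (F.center_mem_ends i) hxK]
  by_cases hcα : c' (F.edge i) = α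
  · obtain ⟨l, hl, hαl, hlK⟩ := hαwit i hi hin hcα
    exact ⟨l, hl, by rwa [missingOn_kempeSwap_of_notMem hlK, hcα]⟩
  have hcβ : c' (F.edge i) ≠ β := hβx.2 _ (edge_mem_compl hi) (F.center_mem_ends i)
  obtain ⟨l, hl, hmiss⟩ := hF i hi hin
  refine ⟨l, hl, ?_⟩
  by_cases hlK : F.vx l ∈ K
  · rwa [mem_missingOn_kempeSwap_of_mem hα hβ hlK, Equiv.swap_apply_of_ne_of_ne hcα hcβ]
  · rwa [missingOn_kempeSwap_of_notMem hlK]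

/-- Otherwise the swap would make `β` missing at both the center and `F.vx t`. -/
theorem PrefixFan.notMem_missingOn_of_mem_kempeChain (hG : ∀ c, ¬ G.IsProperColoring k c)
    (hc' : G.IsProperColoringOn k {e₀}ᶜ c') (hα : α ∈ Set.Icc 1 k)
    {K : (G.kempeGraph {e₀}ᶜ c' α β).ConnectedComponent} (hxK : x ∉ K)
    (hβx : β ∈ G.missingOn k {e₀}ᶜ c' x) (hF : F.PrefixFan c' n)
    (hαwit : ∀ i : Fin (F.p + 1), i ≠ 0 → (i : ℕ) ≤ n → c' (F.edge i) = α →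
      ∃ l < i, α ∈ G.missingOn k {e₀}ᶜ c' (F.vx l) ∧ F.vx l ∉ K)
    {t : Fin (F.p + 1)} (ht : (t : ℕ) ≤ n) (htK : F.vx t ∈ K) :
    α ∉ G.missingOn k {e₀}ᶜ c' (F.vx t) := by
  intro hαt
  refine Set.disjoint_left.1 ((hF.kempeSwap hα hβx.1 hxK hβx hαwit).disjoint_missingOn_center hG
    (hc'.kempeSwap hα hβx.1) ht) (?_ : β ∈ _) ?_
  · rwa [missingOn_kempeSwap_of_notMem hxK]
  · rwa [mem_missingOn_kempeSwap_of_mem hα hβx.1 htK, Equiv.swap_apply_right]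

/-- Swap the chain of `F.vx i`, on the fan cut just before its `α`-edge (if any). -/
theorem PrefixFan.notMem_missingOn_of_center_notMem (hG : ∀ c, ¬ G.IsProperColoring k c)
    (hc' : G.IsProperColoringOn k {e₀}ᶜ c') (hF : F.PrefixFan c' n)
    (hβx : β ∈ G.missingOn k {e₀}ᶜ c' x) {i : Fin (F.p + 1)} (hi : (i : ℕ) ≤ n)
    (hxK : x ∉ (G.kempeGraph {e₀}ᶜ c' α β).connectedComponentMk (F.vx i))
    (hK : ∀ l : Fin (F.p + 1), (l : ℕ) < n → α ∈ G.missingOn k {e₀}ᶜ c' (F.vx l) →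
      F.vx l ∈ (G.kempeGraph {e₀}ᶜ c' α β).connectedComponentMk (F.vx i)) :
    α ∉ G.missingOn k {e₀}ᶜ c' (F.vx i) := by
  intro hαi
  by_cases hαe : ∃ i' : Fin (F.p + 1), i' ≠ 0 ∧ (i' : ℕ) ≤ n ∧ c' (F.edge i') = α
  · obtain ⟨i', hi'0, hi', hcα⟩ := hαe
    obtain ⟨l, hl, hαl⟩ := hF i' hi'0 hi'
    rw [hcα] at hαl
    have hi'1 : 1 ≤ (i' : ℕ) := Nat.one_le_iff_ne_zero.2 (Fin.val_ne_zero_iff.2 hi'0)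
    refine (hF.mono (n := i' - 1) (by omega)).notMem_missingOn_of_mem_kempeChain hG hc' hαi.1
      hxK hβx (fun i'' hi''0 hi'' hcα' => ?_) (t := l) (by omega) (hK l (by omega) hαl) hαl
    have : F.edge i'' = F.edge i' := by_contra fun h => hc'.2 _ (edge_mem_compl hi''0) _
      (edge_mem_compl hi'0) h ⟨x, F.center_mem_ends _, F.center_mem_ends _⟩ (hcα'.trans hcα.symm)
    have := F.edge_inj this
    omega
  · push Not at hαe
    exact hF.notMem_missingOn_of_mem_kempeChain hG hc' hαi.1 hxK hβx
      (fun i' hi'0 hi' hcα => absurd hcα (hαe i' hi'0 hi')) hi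
      SimpleGraph.ConnectedComponent.connectedComponentMk_mem hαi

theorem PrefixFan.disjoint_missingOn_vx (hG : ∀ c, ¬ G.IsProperColoring k c)
    (hΔ : G.maxDegree ≤ k) (hc' : G.IsProperColoringOn k {e₀}ᶜ c') {m : ℕ}
    (hF : F.PrefixFan c' m) {i j : Fin (F.p + 1)} (hi : (i : ℕ) ≤ m) (hj : (j : ℕ) ≤ m)
    (hne : F.vx i ≠ F.vx j) :
    Disjoint (G.missingOn k {e₀}ᶜ c' (F.vx i)) (G.missingOn k {e₀}ᶜ c' (F.vx j)) := by
  induction m generalizing i j with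
  | zero => exact absurd (congrArg F.vx (Fin.ext (by omega))) hne
  | succ m ih =>
  wlog hij : i < j generalizing i j
  · exact (this hj hi hne.symm (lt_of_le_of_ne (not_lt.1 hij) fun h => hne (h ▸ rfl))).symm
  by_cases hjm : (j : ℕ) ≤ m
  · exact ih (hF.mono m.le_succ) (by omega) hjm hne
  rw [Set.disjoint_left]
  intro α hαi hαj
  -- by induction, `F.vx i` is the only earlier fan vertex missing `α`
  have hfresh : ∀ l : Fin (F.p + 1), (l : ℕ) ≤ m →
      α ∈ G.missingOn k {e₀}ᶜ c' (F.vx l) → F.vx l = F.vx i := fun l hl hαl =>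
    by_contra fun h => Set.disjoint_left.1 (ih (hF.mono m.le_succ) hl (by omega) h) hαl hαi
  obtain ⟨β, hβx⟩ := missingOn_compl_singleton_nonempty (c := c') hΔ
    (F.edge_zero ▸ F.center_mem_ends 0)
  set H := G.kempeGraph {e₀}ᶜ c' α β
  have hmem : ∀ v, v ∈ H.connectedComponentMk v := fun _ =>
    SimpleGraph.ConnectedComponent.connectedComponentMk_mem
  by_cases hxK : x ∈ H.connectedComponentMk (F.vx i)
  · -- the chain of `F.vx i` ends at `x`, so the chain of `F.vx j` avoids both
    have hjK := notMem_kempeChain_of_missingOn hc' (hmem _) hxK (F.vx_ne_center i) hne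
      (F.vx_ne_center j).symm hαi hβx hαj
    have hiK : F.vx i ∉ H.connectedComponentMk (F.vx j) := fun h =>
      hjK (show H.connectedComponentMk (F.vx j) = _ from (Eq.symm h :))
    refine hF.notMem_missingOn_of_mem_kempeChain hG hc' hαi.1
      (fun h => hiK (show H.connectedComponentMk (F.vx i) = _ from (Eq.trans hxK.symm h :)))
      hβx (fun i' hi'0 hi' hcα => ?_) hj (hmem _) hαj
    obtain ⟨l, hl, hαl⟩ := hF i' hi'0 hi'
    rw [hcα] at hαl
    exact ⟨l, hl, hαl, hfresh l (by omega) hαl ▸ hiK⟩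
  · exact hF.notMem_missingOn_of_center_notMem hG hc' hβx hi hxK
      (fun l hl hαl => hfresh l (by omega) hαl ▸ hmem _) hαi

theorem isElementaryOn_verts (hG : ∀ c, ¬ G.IsProperColoring k c) (hΔ : G.maxDegree ≤ k)
    (hc : G.IsProperColoringOn k {e₀}ᶜ c) (F : MultiFan G k {e₀}ᶜ c x e₀ y) :
    G.IsElementaryOn k {e₀}ᶜ c F.verts := by
  have hx : ∀ i, Disjoint (G.missingOn k {e₀}ᶜ c x) (G.missingOn k {e₀}ᶜ c (F.vx i)) := fun i =>
    (F.prefixFan F.p).disjoint_missingOn_center hG hc (Nat.lt_succ_iff.1 i.2)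
  rintro u (rfl | ⟨i, rfl⟩) v (rfl | ⟨j, rfl⟩) huv <;> rw [← Set.disjoint_iff_inter_eq_empty]
  · exact absurd rfl huv
  · exact hx j
  · exact (hx i).symm
  · exact (F.prefixFan F.p).disjoint_missingOn_vx hG hΔ hc (Nat.lt_succ_iff.1 i.2)
      (Nat.lt_succ_iff.1 j.2) huv

theorem IsMaximal.exists_color_eq (hG : ∀ c, ¬ G.IsProperColoring k c) (hΔ : G.maxDegree ≤ k)
    (hc : G.IsProperColoringOn k {e₀}ᶜ c) (hF : F.IsMaximal) {l : Fin (F.p + 1)} {γ : ℕ}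
    (hγ : γ ∈ G.missingOn k {e₀}ᶜ c (F.vx l)) : ∃ i ≠ 0, c (F.edge i) = γ := by
  have hγx : γ ∉ G.missingOn k {e₀}ᶜ c x := fun hγx =>
    (Set.eq_empty_iff_forall_notMem.1 (isElementaryOn_verts hG hΔ hc F x (Set.mem_insert _ _)
      (F.vx l) (Set.mem_insert_of_mem _ ⟨l, rfl⟩) (F.vx_ne_center l).symm)) γ ⟨hγx, hγ⟩
  obtain ⟨f, hf, hfx, rfl⟩ : ∃ f ∈ ({e₀}ᶜ : Set G.E), x ∈ G.ends f ∧ c f = γ := by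
    by_contra! h
    exact hγx ⟨hγ.1, h⟩
  obtain ⟨i, rfl⟩ := hF.exists_edge_eq hfx hγ
  exact ⟨i, fun hi => hf (hi ▸ F.edge_zero), rfl⟩

theorem IsMaximal.sum_ncard_missingOn_le [DecidableEq G.V] (hG : ∀ c, ¬ G.IsProperColoring k c)
    (hΔ : G.maxDegree ≤ k) (hc : G.IsProperColoringOn k {e₀}ᶜ c) (hF : F.IsMaximal) :
    ∑ z ∈ Finset.univ.image F.vx, (G.missingOn k {e₀}ᶜ c z).ncard ≤ F.p := by
  have hdisj : (↑(Finset.univ.image F.vx) : Set G.V).PairwiseDisjoint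
      (G.missingOn k {e₀}ᶜ c) := by
    intro u hu v hv huv
    rw [Function.onFun, Set.disjoint_iff_inter_eq_empty]
    simp only [Finset.coe_image, Finset.coe_univ, Set.image_univ] at hu hv
    exact isElementaryOn_verts hG hΔ hc F u (Set.mem_insert_of_mem _ hu) v
      (Set.mem_insert_of_mem _ hv) huv
  have hsub : (⋃ z ∈ (↑(Finset.univ.image F.vx) : Set G.V), G.missingOn k {e₀}ᶜ c z) ⊆
      (fun i => c (F.edge i)) '' {i | i ≠ 0} := by
    simp only [Finset.coe_image, Finset.coe_univ, Set.image_univ, Set.iUnion_subset_iff,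
      Set.mem_range, forall_exists_index, forall_apply_eq_imp_iff]
    intro l γ hγ
    exact hF.exists_color_eq hG hΔ hc hγ
  calc ∑ z ∈ Finset.univ.image F.vx, (G.missingOn k {e₀}ᶜ c z).ncard
      = (⋃ z ∈ (↑(Finset.univ.image F.vx) : Set G.V), G.missingOn k {e₀}ᶜ c z).ncard := by
        rw [(Finset.finite_toSet _).ncard_biUnion (fun z _ => finite_missingOn z) hdisj,
          finsum_mem_coe_finset]
    _ ≤ ((fun i => c (F.edge i)) '' {i | i ≠ 0}).ncard := Set.ncard_le_ncard hsub (Set.toFinite _)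
    _ ≤ ({i | i ≠ 0} : Set (Fin (F.p + 1))).ncard := Set.ncard_image_le (Set.toFinite _)
    _ = F.p := by
        rw [show ({i | i ≠ 0} : Set (Fin (F.p + 1))) = {0}ᶜ from rfl, Set.ncard_compl]
        simp

theorem IsMaximal.card_mul_add_one_le_sum [DecidableEq G.V] (hG : ∀ c, ¬ G.IsProperColoring k c)
    (hΔ : G.maxDegree ≤ k) (hc : G.IsProperColoringOn k {e₀}ᶜ c) (hF : F.IsMaximal) :
    (Finset.univ.image F.vx).card * k + 1 ≤
      ∑ z ∈ Finset.univ.image F.vx, (F.multAt z + G.degreeOn {e₀}ᶜ z) := by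
  set Z := Finset.univ.image F.vx
  calc Z.card * k + 1 = ∑ z ∈ Z, k + 1 := by rw [Finset.sum_const, smul_eq_mul]
    _ ≤ ∑ z ∈ Z, ((G.missingOn k {e₀}ᶜ c z).ncard + G.degreeOn {e₀}ᶜ z) + 1 := by
      gcongr with z
      exact le_ncard_missingOn_add_degreeOn z
    _ ≤ F.p + ∑ z ∈ Z, G.degreeOn {e₀}ᶜ z + 1 := by
      rw [Finset.sum_add_distrib]
      gcongr
      exact hF.sum_ncard_missingOn_le hG hΔ hc
    _ = ∑ z ∈ Z, (F.multAt z + G.degreeOn {e₀}ᶜ z) := by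
      rw [Finset.sum_add_distrib, F.sum_multAt]
      ring

/-- The equality case of `IsMaximal.card_mul_add_one_le_sum`. -/
theorem IsMaximal.eq_maxMult_of_degreeOn_le [DecidableEq G.V]
    (hG : ∀ c, ¬ G.IsProperColoring k c) (hΔ : G.maxDegree ≤ k)
    (hc : G.IsProperColoringOn k {e₀}ᶜ c) (hF : F.IsMaximal) (b : G.V → ℕ)
    (hb : ∀ z ∈ Finset.univ.image F.vx, G.degreeOn {e₀}ᶜ z ≤ b z)
    (hsum : ∑ z ∈ Finset.univ.image F.vx, (G.maxMult + b z) ≤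
      (Finset.univ.image F.vx).card * k + 1) :
    ∀ z ∈ Finset.univ.image F.vx,
      F.multAt z = G.mult x z ∧ G.mult x z = G.maxMult ∧ G.degreeOn {e₀}ᶜ z = b z := by
  have hle : ∀ z ∈ Finset.univ.image F.vx,
      F.multAt z + G.degreeOn {e₀}ᶜ z ≤ G.maxMult + b z := fun z hz =>
    add_le_add ((F.multAt_le_mult z).trans (mult_le_maxMult x z)) (hb z hz)
  have heq := (Finset.sum_eq_sum_iff_of_le hle).1 (le_antisymm (Finset.sum_le_sum hle)
    (hsum.trans (hF.card_mul_add_one_le_sum hG hΔ hc)))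
  intro z hz
  have := heq z hz
  have := hb z hz
  have := F.multAt_le_mult z
  have := mult_le_maxMult x z
  omega

theorem degreeOn_vx_eq_degree (hends : G.ends e₀ = s(x, y)) {i : Fin (F.p + 1)}
    (hi : F.vx i ≠ y) : G.degreeOn {e₀}ᶜ (F.vx i) = G.degree (F.vx i) := by
  refine degreeOn_compl_singleton_of_notMem fun h => ?_
  rw [hends, Sym2.mem_iff] at h
  exact h.elim (F.vx_ne_center i) hi

theorem degreeOn_vx_le [DecidableEq G.V] (hends : G.ends e₀ = s(x, y)) {z' : G.V}
    (huniq : ∀ z ∈ F.verts, z ≠ x → z ≠ y → (∃ f : G.E, G.ends f = s(x, z)) →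
      G.degree z = G.maxDegree → z = z') (i : Fin (F.p + 1)) :
    G.degreeOn {e₀}ᶜ (F.vx i) ≤ G.maxDegree - 1 + if F.vx i = z' then 1 else 0 := by
  have hΔ := degree_le_maxDegree (F.vx i)
  by_cases hiy : F.vx i = y
  · have := degreeOn_compl_singleton_add_one (hiy ▸ hends ▸ Sym2.mem_mk_right x y)
    omega
  rw [degreeOn_vx_eq_degree hends hiy]
  split_ifs with hiz'
  · omega
  have := mt (huniq _ (Set.mem_insert_of_mem _ ⟨i, rfl⟩) (F.vx_ne_center i) hiy
    ⟨_, F.ends_eq i⟩) hiz'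
  omega

end MultiFan

end Multigraph

theorem maximal_multifan_unique_delta_neighbor_general (G : Multigraph) (k : ℕ)
    (hμ : 2 ≤ G.maxMult) (hk : k + 1 = G.maxDegree + G.maxMult)
    (hχ : G.chromIndex = k + 1)
    (x y : G.V) (e₀ : G.E) (hends : G.ends e₀ = s(x, y))
    (φ : G.E → ℕ) (hφ : G.IsProperColoringOn k {e₀}ᶜ φ)
    (F : Multigraph.MultiFan G k {e₀}ᶜ φ x e₀ y) (hF : F.IsMaximal)
    (z' : G.V)
    (hz' : z' ∈ F.verts ∧ z' ≠ x ∧ z' ≠ y ∧ (∃ f : G.E, G.ends f = s(x, z')) ∧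
      G.degree z' = G.maxDegree)
    (huniq : ∀ z ∈ F.verts, z ≠ x → z ≠ y → (∃ f : G.E, G.ends f = s(x, z)) →
      G.degree z = G.maxDegree → z = z') :
    (∀ z ∈ F.verts, z ≠ x → F.multAt z = G.mult x z ∧ G.mult x z = G.maxMult) ∧
    (∀ z ∈ F.verts, z ≠ x → z ≠ y → z ≠ z' → G.degree z = G.maxDegree - 1) := by
  classical
  obtain ⟨hz'F, hz'x, -, -, -⟩ := hz'
  have hΔ : 1 ≤ G.maxDegree := by
    have := Multigraph.degreeOn_compl_singleton_add_one (hends ▸ Sym2.mem_mk_right x y)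
    have := Multigraph.degree_le_maxDegree y
    omega
  have htight := hF.eq_maxMult_of_degreeOn_le
    (Multigraph.not_isProperColoring_of_lt_chromIndex (by omega)) (by omega) hφ
    (fun z => G.maxDegree - 1 + if z = z' then 1 else 0)
    (by
      intro z hz
      obtain ⟨i, -, rfl⟩ := Finset.mem_image.1 hz
      exact F.degreeOn_vx_le hends huniq i)
    (by
      rw [Finset.sum_add_distrib, Finset.sum_add_distrib, Finset.sum_ite_eq',
        if_pos (F.mem_image_vx_of_mem_verts hz'F hz'x)]
      simp only [Finset.sum_const, smul_eq_mul]
      rw [congrArg (_ * ·) (show k = G.maxMult + (G.maxDegree - 1) by omega), Nat.mul_add]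
      omega)
  refine ⟨fun z hz hzx => (htight z (F.mem_image_vx_of_mem_verts hz hzx)).imp_right And.left,
    fun z hz hzx hzy hzz' => ?_⟩
  obtain ⟨i, rfl⟩ : ∃ i, F.vx i = z := hz.resolve_left hzx
  have := (htight _ (F.mem_image_vx_of_mem_verts hz hzx)).2.2
  rwa [if_neg hzz', F.degreeOn_vx_eq_degree hends hzy, add_zero] at this

/-- **Lemma 3.2(b).** Let `G` have maximum degree `Δ`, maximum multiplicity `μ ≥ 2`, let
`k = Δ+μ-1`, `χ'(G) = k+1`, `e ∈ E_G(x,y)` `k`-critical, `φ` a `k`-edge-coloring of `G-e`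
and `F` a maximal multi-fan at `x` with respect to `e` and `φ`. If `d_G(y) = Δ` and `x` has
exactly one `Δ`-neighbor `z'` in `G` from `V(F)∖{x,y}`, then `e_F(x,z) = e_G(x,z) = μ` for
all `z ∈ V(F)∖{x}` and `d_G(z) = Δ-1` for all `z ∈ V(F)∖{x,y,z'}`. -/
theorem maximal_multifan_unique_delta_neighbor (G : Multigraph) (k : ℕ)
    (hμ : 2 ≤ G.maxMult) (hk : k + 1 = G.maxDegree + G.maxMult)
    (hχ : G.chromIndex = k + 1)
    (x y : G.V) (e₀ : G.E) (hends : G.ends e₀ = s(x, y))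
    (he : G.IsCriticalEdge k e₀)
    (φ : G.E → ℕ) (hφ : G.IsProperColoringOn k {e₀}ᶜ φ)
    (F : Multigraph.MultiFan G k {e₀}ᶜ φ x e₀ y) (hF : F.IsMaximal)
    (hy : G.degree y = G.maxDegree)
    (z' : G.V)
    (hz' : z' ∈ F.verts ∧ z' ≠ x ∧ z' ≠ y ∧ (∃ f : G.E, G.ends f = s(x, z')) ∧
      G.degree z' = G.maxDegree)
    (huniq : ∀ z ∈ F.verts, z ≠ x → z ≠ y → (∃ f : G.E, G.ends f = s(x, z)) →
      G.degree z = G.maxDegree → z = z') :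
    (∀ z ∈ F.verts, z ≠ x → F.multAt z = G.mult x z ∧ G.mult x z = G.maxMult) ∧
    (∀ z ∈ F.verts, z ≠ x → z ≠ y → z ≠ z' → G.degree z = G.maxDegree - 1) :=
  maximal_multifan_unique_delta_neighbor_general G k hμ hk hχ x y e₀ hends φ hφ F hF z' hz' huniq
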